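/- Let A be an n×n nonnegative irreducible real matrix such that A² is not irreducible. Then neither AᵀA nor AAᵀ is irreducible. -/

import Mathlib

/-
The hypotheses give indices `i, j` such that every walk from `i` to `j` in the digraph of `A` has
odd length. Since `A` is irreducible, this makes the parity of walks from `i` to any vertex `u` well
defined, and every edge of `A` switches it: `A` is bipartite. An edge of `AᵀA` or `AAᵀ` is a pair of
edges of `A` with a common tail or head, so it preserves parity; hence so does every power of these
matrices, and no power of them has a positive `(i, j)` entry.
-/

open Matrix

/-- A nonnegative matrix is irreducible if for every pair (i,j) some power has a
positive (i,j) entry. -/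
def MatIrred {n : ℕ} (A : Matrix (Fin n) (Fin n) ℝ) : Prop :=
  ∀ i j : Fin n, ∃ m : ℕ, 0 < m ∧ 0 < (A ^ m) i j

/-- A nonnegative matrix is primitive if some power has all entries positive. -/
def MatPrimitive {n : ℕ} (A : Matrix (Fin n) (Fin n) ℝ) : Prop :=
  ∃ m : ℕ, 0 < m ∧ ∀ i j : Fin n, 0 < (A ^ m) i j

namespace Matrix

section Walks

variable {ι κ μ R : Type*} [Semiring R] [PartialOrder R] [IsStrictOrderedRing R]

lemma mul_apply_nonneg [Fintype κ] {A : Matrix ι κ R} {B : Matrix κ μ R}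
    (hA : ∀ i k, 0 ≤ A i k) (hB : ∀ k j, 0 ≤ B k j) (i : ι) (j : μ) : 0 ≤ (A * B) i j :=
  Finset.sum_nonneg fun k _ => mul_nonneg (hA i k) (hB k j)

lemma mul_apply_pos_iff [Fintype κ] {A : Matrix ι κ R} {B : Matrix κ μ R}
    (hA : ∀ i k, 0 ≤ A i k) (hB : ∀ k j, 0 ≤ B k j) {i : ι} {j : μ} :
    0 < (A * B) i j ↔ ∃ k, 0 < A i k ∧ 0 < B k j := by
  rw [mul_apply, Finset.sum_pos_iff_of_nonneg fun k _ => mul_nonneg (hA i k) (hB k j)]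
  refine exists_congr fun k =>
    ⟨fun ⟨_, h⟩ => ⟨?_, ?_⟩, fun ⟨h₁, h₂⟩ => ⟨Finset.mem_univ k, mul_pos h₁ h₂⟩⟩
  · exact (hA i k).lt_of_ne fun h₀ => h.ne (by rw [← h₀, zero_mul])
  · exact (hB k j).lt_of_ne fun h₀ => h.ne (by rw [← h₀, mul_zero])

variable [Fintype ι] {A : Matrix ι ι R} {c : ι → Prop}

lemma iff_of_transpose_mul_self_apply_pos (hA : ∀ i j, 0 ≤ A i j)
    (hc : ∀ u v, 0 < A u v → (c v ↔ ¬ c u)) {u v : ι} (huv : 0 < (Aᵀ * A) u v) : c u ↔ c v := by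
  obtain ⟨k, hku, hkv⟩ := (mul_apply_pos_iff (fun i j => hA j i) hA).1 huv
  have := hc k u hku
  have := hc k v hkv
  tauto

lemma iff_of_mul_transpose_self_apply_pos (hA : ∀ i j, 0 ≤ A i j)
    (hc : ∀ u v, 0 < A u v → (c v ↔ ¬ c u)) {u v : ι} (huv : 0 < (A * Aᵀ) u v) : c u ↔ c v := by
  obtain ⟨k, huk, hvk⟩ := (mul_apply_pos_iff hA fun i j => hA j i).1 huv
  have := hc u k huk
  have := hc v k hvk
  tauto

variable [DecidableEq ι]

lemma pow_add_apply_pos (hA : ∀ i j, 0 ≤ A i j) {a b : ℕ} {u v w : ι}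
    (huv : 0 < (A ^ a) u v) (hvw : 0 < (A ^ b) v w) : 0 < (A ^ (a + b)) u w := by
  rw [pow_add, mul_apply_pos_iff (pow_apply_nonneg hA a) (pow_apply_nonneg hA b)]
  exact ⟨v, huv, hvw⟩

lemma iff_of_pow_apply_pos (hA : ∀ i j, 0 ≤ A i j)
    (hc : ∀ u v, 0 < A u v → (c u ↔ c v)) (m : ℕ) {u v : ι} (huv : 0 < (A ^ m) u v) :
    c u ↔ c v := by
  induction m generalizing v with
  | zero =>
    obtain rfl : u = v := by by_contra h; simp [one_apply_ne h] at huv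
    rfl
  | succ m ih =>
    rw [pow_succ, mul_apply_pos_iff (pow_apply_nonneg hA m) hA] at huv
    obtain ⟨k, huk, hkv⟩ := huv
    exact (ih huk).trans (hc k v hkv)

end Walks

section Parity

variable {ι R : Type*} [Semiring R] [PartialOrder R] [IsStrictOrderedRing R]
  [Fintype ι] [DecidableEq ι] {A : Matrix ι ι R}

def HasEvenWalk (A : Matrix ι ι R) (i u : ι) : Prop :=
  ∃ m, Even m ∧ 0 < (A ^ m) i u

variable {i j : ι} (hA : ∀ i j, 0 ≤ A i j) (hodd : ∀ m, 0 < m → 0 < (A ^ m) i j → Odd m)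
  (hreach : ∀ u, ∃ r, 0 < r ∧ 0 < (A ^ r) u j)
include hA hodd hreach

/-- Walks from `i` to `u` all have the same parity: extended to `j`, they all become odd. -/
lemma hasEvenWalk_iff_even {a : ℕ} {u : ι} (hu : 0 < (A ^ a) i u) :
    HasEvenWalk A i u ↔ Even a := by
  refine ⟨fun ⟨b, hb, hbu⟩ => ?_, fun ha => ⟨a, ha, hu⟩⟩
  obtain ⟨r, hr, hrj⟩ := hreach u
  have hbr := hodd (b + r) (by omega) (pow_add_apply_pos hA hbu hrj)
  have har := hodd (a + r) (by omega) (pow_add_apply_pos hA hu hrj)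
  rw [Nat.odd_add] at hbr har
  rw [← Nat.not_odd_iff_even] at hb ⊢
  tauto

lemma hasEvenWalk_iff_not_of_apply_pos {u v : ι} (hiu : ∃ a, 0 < (A ^ a) i u)
    (huv : 0 < A u v) : HasEvenWalk A i v ↔ ¬ HasEvenWalk A i u := by
  obtain ⟨a, hu⟩ := hiu
  have hv : 0 < (A ^ (a + 1)) i v := pow_add_apply_pos hA hu (by rwa [pow_one])
  rw [hasEvenWalk_iff_even hA hodd hreach hu, hasEvenWalk_iff_even hA hodd hreach hv,
    Nat.even_add_one]

end Parity

end Matrix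

lemma not_matIrred_of_iff_of_apply_pos {n : ℕ} {B : Matrix (Fin n) (Fin n) ℝ}
    (hB : ∀ i j, 0 ≤ B i j) {c : Fin n → Prop} (hc : ∀ u v, 0 < B u v → (c u ↔ c v))
    {i j : Fin n} (hi : c i) (hj : ¬ c j) : ¬ MatIrred B := fun hirr =>
  let ⟨m, _, hm⟩ := hirr i j
  hj ((iff_of_pow_apply_pos hB hc m hm).1 hi)

lemma exists_forall_odd_of_not_matIrred_sq {n : ℕ} {A : Matrix (Fin n) (Fin n) ℝ}
    (h : ¬ MatIrred (A ^ 2)) : ∃ i j, ∀ m, 0 < m → 0 < (A ^ m) i j → Odd m := by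
  simp only [MatIrred, not_forall, not_exists, not_and] at h
  obtain ⟨i, j, hij⟩ := h
  refine ⟨i, j, fun m hm hmij => Nat.not_even_iff_odd.1 fun ⟨k, hk⟩ => ?_⟩
  subst hk
  exact hij k (by omega) (by rwa [← pow_mul, two_mul])

theorem stmt10 {n : ℕ} (A : Matrix (Fin n) (Fin n) ℝ)
    (hA : ∀ i j, 0 ≤ A i j) (hAirr : MatIrred A) (hA2 : ¬ MatIrred (A ^ 2)) :
    ¬ MatIrred (Aᵀ * A) ∧ ¬ MatIrred (A * Aᵀ) := by
  obtain ⟨i, j, hodd⟩ := exists_forall_odd_of_not_matIrred_sq hA2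
  have hreach : ∀ u, ∃ r, 0 < r ∧ 0 < (A ^ r) u j := fun u => hAirr u j
  have hbip : ∀ u v, 0 < A u v → (HasEvenWalk A i v ↔ ¬ HasEvenWalk A i u) := fun u v =>
    hasEvenWalk_iff_not_of_apply_pos hA hodd hreach (let ⟨a, _, ha⟩ := hAirr i u; ⟨a, ha⟩)
  have hi : HasEvenWalk A i i := ⟨0, .zero, by simp⟩
  have hj : ¬ HasEvenWalk A i j := by
    obtain ⟨m, hm, hmij⟩ := hAirr i j
    rw [hasEvenWalk_iff_even hA hodd hreach hmij, Nat.not_even_iff_odd]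
    exact hodd m hm hmij
  exact ⟨not_matIrred_of_iff_of_apply_pos (mul_apply_nonneg (fun u v => hA v u) hA)
      (fun _ _ => iff_of_transpose_mul_self_apply_pos hA hbip) hi hj,
    not_matIrred_of_iff_of_apply_pos (mul_apply_nonneg hA fun u v => hA v u)
      (fun _ _ => iff_of_mul_transpose_self_apply_pos hA hbip) hi hj⟩
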